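/- arXiv:0710.0318 — 4 statements merged into one kernel-verified Lean document; each statement's English description precedes it below -/
import Mathlib

section
/- If A is a nonempty proper subset of C(v) and T₁ is obtained from T by redefining only the children in A to be children of u (keeping C(v) \ A as children of v, all other parent–child relations unchanged), then there exists a Hamiltonian cycle on S that conforms to T but not to T₁; hence Λ(T) ⊄ Λ(T₁). In other words, the degree-increasing operation cannot be performed partially. -/
/-- A rooted tree on a vertex type `V`, given by a parent function under which
every vertex reaches the root. -/
structure ParentTree (V : Type) where
  root : V
  parent : V → V
  parent_root : parent root = root
  reaches_root : ∀ v, ∃ k, parent^[k] v = root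

namespace ParentTree

variable {V : Type}

/-- The set `C(u)` of children of `u`. -/
def children (T : ParentTree V) (u : V) : Set V := {v | T.parent v = u ∧ v ≠ u}

/-- The set `T(u)` of descendants of `u` (including `u` itself). -/
def desc (T : ParentTree V) (u : V) : Set V := {b | ∃ k, T.parent^[k] b = u}

/-- For a set `U` of siblings, `T(U) = ⋃_{u ∈ U} T(u)`. -/
def descU (T : ParentTree V) (U : Set V) : Set V := ⋃ u ∈ U, T.desc u

end ParentTree

/-- The set of points occurring in a list. -/
def listSet {V : Type} (l : List V) : Set V := {x | x ∈ l}

/-- The weight of a Hamiltonian cycle given as a list: the sum of distances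
over cyclically consecutive pairs. -/
def cycleWeight {V X : Type} [MetricSpace X] (f : V → X) (h : List V) : ℝ :=
  ((h.zip (h.rotate 1)).map fun p => dist (f p.1) (f p.2)).sum

/-- A Hamiltonian cycle on the point set: a cyclic ordering of all points,
represented as a duplicate-free list containing every point. -/
def IsHamCycle {V : Type} (h : List V) : Prop := h.Nodup ∧ ∀ x : V, x ∈ h

/-- The set `A` forms a contiguous cyclic arc of the cycle `h`. -/
def IsCyclicArc {V : Type} (A : Set V) (h : List V) : Prop :=
  ∃ i : ℕ, listSet ((h.rotate i).take A.ncard) = A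

/-- A Hamiltonian cycle conforms to the rooted tree `T` if for every node `u`
the set `T(u)` of descendants of `u` forms a contiguous cyclic arc of the cycle. -/
def CycleConforms {V : Type} (T : ParentTree V) (h : List V) : Prop :=
  ∀ u : V, IsCyclicArc (T.desc u) h

/-!
Take the preorder traversal of `T` in which some `a ∈ A` is the first child of `v` to be
visited. Each `T(w)` is a block of consecutive vertices of it, so as a cycle it conforms to `T`;
and `v` sits between a vertex `p ∉ T(v)` and `a`. Since the only new parent is `u ∉ T(v)`, we
have `T₁(v) ⊆ T(v)` and `a ∉ T₁(v)`. But `T₁(v)` contains `v` and a child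
`b ∈ C(v) \ A`, so an arc of the cycle equal to `T₁(v)` would contain a cyclic neighbour of
`v`, i.e. `p` or `a`.
-/

theorem List.next_mem_take_or_prev_mem_take {α : Type*} [DecidableEq α] {g : List α}
    (hg : g.Nodup) {m : ℕ} (hm : 1 < (g.take m).length) {x : α} (hx : x ∈ g.take m) :
    g.next x (List.mem_of_mem_take hx) ∈ g.take m ∨
      g.prev x (List.mem_of_mem_take hx) ∈ g.take m := by
  obtain ⟨j, hj, rfl⟩ := List.mem_iff_getElem.1 hx
  have hjg : j < g.length := hj.trans_le (List.length_take_le' m g)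
  simp only [List.getElem_take]
  by_cases hjm : j + 1 < (g.take m).length
  · left
    have hj1 : (j + 1) % g.length = j + 1 :=
      Nat.mod_eq_of_lt (hjm.trans_le (List.length_take_le' m g))
    rw [List.next_getElem g hg j hjg]
    simpa [hj1] using List.getElem_mem hjm
  · right
    have hj1 : (j + (g.length - 1)) % g.length = j - 1 := by
      rw [show j + (g.length - 1) = j - 1 + g.length by omega, Nat.add_mod_right,
        Nat.mod_eq_of_lt (by omega)]
    rw [List.prev_getElem g hg j hjg]
    simpa [hj1] using List.getElem_mem (show j - 1 < (g.take m).length by omega)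

theorem List.next_eq_and_prev_eq_of_infix {α : Type*} [DecidableEq α] {l : List α}
    (hl : l.Nodup) {p x y : α} (hpxy : [p, x, y] <:+: l) (hx : x ∈ l) :
    l.next x hx = y ∧ l.prev x hx = p := by
  obtain ⟨s, t, rfl⟩ := hpxy
  have hrot : s ++ [p, x, y] ++ t ~r x :: y :: (t ++ (s ++ [p])) := by
    convert List.isRotated_append (l := s ++ [p]) (l' := x :: y :: t) using 1 <;> simp
  rw [List.isRotated_next_eq hrot hl, List.isRotated_prev_eq hrot hl, List.next_cons_cons_eq,
    List.prev_getLast_cons]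
  simp

theorem listSet_eq_coe_toFinset {V : Type} [DecidableEq V] (l : List V) :
    listSet l = ↑l.toFinset :=
  Set.ext fun _ => List.mem_toFinset.symm

theorem ncard_listSet_le {V : Type} (l : List V) : (listSet l).ncard ≤ l.length := by
  classical
  rw [listSet_eq_coe_toFinset, Set.ncard_coe_finset]
  exact List.toFinset_card_le l

theorem ncard_listSet_of_nodup {V : Type} {l : List V} (hl : l.Nodup) :
    (listSet l).ncard = l.length := by
  classical
  rw [listSet_eq_coe_toFinset, Set.ncard_coe_finset, List.toFinset_card_of_nodup hl]

theorem isCyclicArc_listSet_of_infix {V : Type} {l h : List V} (hlh : l <:+: h) (hl : l.Nodup) :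
    IsCyclicArc (listSet l) h := by
  obtain ⟨s, t, rfl⟩ := hlh
  refine ⟨s.length, ?_⟩
  rw [List.append_assoc, List.rotate_append_length_eq, ncard_listSet_of_nodup hl,
    List.append_assoc, List.take_left]

theorem IsCyclicArc.next_mem_or_prev_mem {V : Type} [DecidableEq V] {A : Set V} {h : List V}
    (hA : IsCyclicArc A h) (hh : h.Nodup) (hA1 : 1 < A.ncard) {x : V} (hxh : x ∈ h)
    (hxA : x ∈ A) : h.next x hxh ∈ A ∨ h.prev x hxh ∈ A := by
  obtain ⟨i, hi⟩ := hA
  generalize A.ncard = m at hi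
  subst hi
  have hrot : h ~r h.rotate i := ⟨i, rfl⟩
  rw [List.isRotated_next_eq hrot hh, List.isRotated_prev_eq hrot hh]
  exact List.next_mem_take_or_prev_mem_take (List.nodup_rotate.2 hh)
    (hA1.trans_le (ncard_listSet_le _)) hxA

namespace ParentTree

variable {V : Type}

section

variable (T : ParentTree V)

theorem iterate_parent_root (k : ℕ) : T.parent^[k] T.root = T.root :=
  Function.iterate_fixed T.parent_root k

theorem eq_root_of_isPeriodicPt {w : V} {m : ℕ} (hm : 0 < m)
    (hw : Function.IsPeriodicPt T.parent m w) : w = T.root := by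
  obtain ⟨k, hk⟩ := T.reaches_root w
  calc w = T.parent^[m * k] w := ((hw.mul_const k).eq).symm
    _ = T.parent^[m * k - k] (T.parent^[k] w) := by
      rw [← Function.iterate_add_apply, Nat.sub_add_cancel (Nat.le_mul_of_pos_left k hm)]
    _ = T.root := by rw [hk, iterate_parent_root]

theorem mem_desc_self (w : V) : w ∈ T.desc w := ⟨0, rfl⟩

theorem mem_desc_of_parent_mem_desc {x w : V} (h : T.parent x ∈ T.desc w) : x ∈ T.desc w := by
  obtain ⟨k, hk⟩ := h
  exact ⟨k + 1, hk⟩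

theorem parent_mem_desc_of_mem_desc {x w : V} (h : x ∈ T.desc w) (hxw : x ≠ w) :
    T.parent x ∈ T.desc w := by
  obtain ⟨_ | k, hk⟩ := h
  · exact absurd hk hxw
  · exact ⟨k, hk⟩

theorem desc_subset_desc_of_mem_desc {x w : V} (h : x ∈ T.desc w) : T.desc x ⊆ T.desc w := by
  rintro y ⟨j, rfl⟩
  obtain ⟨k, rfl⟩ := h
  exact ⟨k + j, Function.iterate_add_apply _ _ _ _⟩

theorem mem_desc_of_mem_children {c w : V} (hc : c ∈ T.children w) : c ∈ T.desc w :=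
  ⟨1, hc.1⟩

theorem not_mem_desc_of_mem_children {c w : V} (hc : c ∈ T.children w) : w ∉ T.desc c := by
  rintro ⟨k, hk⟩
  have hperiodic : Function.IsPeriodicPt T.parent (k + 1) c := by
    rw [Function.IsPeriodicPt, Function.IsFixedPt, Function.iterate_succ_apply, hc.1, hk]
  have hroot := T.eq_root_of_isPeriodicPt k.succ_pos hperiodic
  exact hc.2 (by rw [← hc.1, hroot, T.parent_root])

theorem ne_root_of_mem_children {c w : V} (hc : c ∈ T.children w) : c ≠ T.root := by
  rintro rfl
  exact hc.2 (hc.1.symm.trans T.parent_root).symm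

theorem desc_eq_insert_biUnion_children (w : V) :
    T.desc w = insert w (⋃ c ∈ T.children w, T.desc c) := by
  ext x
  simp only [Set.mem_insert_iff, Set.mem_iUnion, exists_prop]
  constructor
  · rintro ⟨k, hk⟩
    induction k with
    | zero => exact Or.inl hk
    | succ k ih =>
      rw [Function.iterate_succ_apply'] at hk
      by_cases hw : T.parent^[k] x = w
      · exact ih hw
      · exact Or.inr ⟨T.parent^[k] x, ⟨hk, hw⟩, ⟨k, rfl⟩⟩
  · rintro (rfl | ⟨c, hc, hx⟩)
    · exact T.mem_desc_self x
    · exact T.desc_subset_desc_of_mem_desc (T.mem_desc_of_mem_children hc) hx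

theorem mem_desc_or_mem_desc_of_mem_desc {x c c' : V} (hx : x ∈ T.desc c)
    (hx' : x ∈ T.desc c') : c ∈ T.desc c' ∨ c' ∈ T.desc c := by
  obtain ⟨i, rfl⟩ := hx
  obtain ⟨j, rfl⟩ := hx'
  rcases le_total i j with hij | hij
  · refine Or.inl ⟨j - i, ?_⟩
    rw [← Function.iterate_add_apply, Nat.sub_add_cancel hij]
  · refine Or.inr ⟨i - j, ?_⟩
    rw [← Function.iterate_add_apply, Nat.sub_add_cancel hij]

theorem eq_of_mem_desc_of_mem_children {x c c' w : V} (hc : c ∈ T.children w)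
    (hc' : c' ∈ T.children w) (hx : x ∈ T.desc c) (hx' : x ∈ T.desc c') : c = c' := by
  by_contra hne
  rcases T.mem_desc_or_mem_desc_of_mem_desc hx hx' with h | h
  · have := T.parent_mem_desc_of_mem_desc h hne
    rw [hc.1] at this
    exact T.not_mem_desc_of_mem_children hc' this
  · have := T.parent_mem_desc_of_mem_desc h (Ne.symm hne)
    rw [hc'.1] at this
    exact T.not_mem_desc_of_mem_children hc this

theorem ncard_desc_lt_of_mem_children [Finite V] {c w : V} (hc : c ∈ T.children w) :
    (T.desc c).ncard < (T.desc w).ncard :=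
  Set.ncard_lt_ncard ⟨T.desc_subset_desc_of_mem_desc (T.mem_desc_of_mem_children hc),
    fun h => T.not_mem_desc_of_mem_children hc (h (T.mem_desc_self w))⟩

theorem ncard_desc_pos [Finite V] (w : V) : 0 < (T.desc w).ncard :=
  (Set.ncard_pos (Set.toFinite _)).2 ⟨w, T.mem_desc_self w⟩

def IsChildOrder (cl : V → List V) : Prop :=
  ∀ w, (cl w).Nodup ∧ ∀ c, c ∈ cl w ↔ c ∈ T.children w

/-- Preorder traversal of `T(w)` cut off at depth `n`; the cut-off is harmless once
`n ≥ |T(w)|`, which is why `preorder` uses the depth `Nat.card V`. -/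
def preorderAux (cl : V → List V) : ℕ → V → List V
  | 0, w => [w]
  | n + 1, w => w :: (cl w).flatMap (preorderAux cl n)

theorem preorderAux_eq_cons {cl : V → List V} (n : ℕ) (w : V) :
    ∃ l, preorderAux cl n w = w :: l := by
  cases n <;> exact ⟨_, rfl⟩

noncomputable def preorder (cl : V → List V) (w : V) : List V := preorderAux cl (Nat.card V) w

theorem preorder_eq_cons_cons [Finite V] {cl : V → List V} {w c : V} {l : List V}
    (hw : cl w = c :: l) : ∃ l', preorder cl w = w :: c :: l' := by
  have : Nonempty V := ⟨w⟩
  obtain ⟨n, hn⟩ : ∃ n, Nat.card V = n + 1 := Nat.exists_eq_add_one.2 Nat.card_pos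
  obtain ⟨l', hl'⟩ := preorderAux_eq_cons (cl := cl) n c
  exact ⟨_, by rw [preorder, hn, preorderAux, hw, List.flatMap_cons, hl', List.cons_append]⟩

theorem exists_isChildOrder_head [Finite V] (a : V) :
    ∃ cl : V → List V, T.IsChildOrder cl ∧
      ∀ w, a ∈ T.children w → ∃ l, cl w = a :: l := by
  classical
  let ℓ : V → List V := fun w => (T.children w).toFinite.toFinset.toList
  refine ⟨fun w => if a ∈ ℓ w then a :: (ℓ w).erase a else ℓ w, fun w => ?_,
    fun w ha => ?_⟩
  · have hperm : (if a ∈ ℓ w then a :: (ℓ w).erase a else ℓ w).Perm (ℓ w) := by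
      split_ifs with ha
      · exact (List.perm_cons_erase ha).symm
      · exact List.Perm.refl _
    refine ⟨hperm.nodup_iff.2 (Finset.nodup_toList _), fun c => ?_⟩
    rw [hperm.mem_iff, Finset.mem_toList, Set.Finite.mem_toFinset]
  · have haℓ : a ∈ ℓ w := by
      rw [Finset.mem_toList, Set.Finite.mem_toFinset]
      exact ha
    exact ⟨_, if_pos haℓ⟩

theorem desc_subset_desc_of_parent_eq_or_not_mem_desc {T₁ : ParentTree V} {v : V}
    (hpar : ∀ x, T₁.parent x = T.parent x ∨ T₁.parent x ∉ T.desc v) :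
    T₁.desc v ⊆ T.desc v := by
  rintro x ⟨k, hk⟩
  induction k generalizing x with
  | zero => rw [← hk]; exact T.mem_desc_self _
  | succ k ih =>
    have hx := ih hk
    rcases hpar x with h | h
    · exact T.mem_desc_of_parent_mem_desc (h ▸ hx)
    · exact absurd hx h

end

namespace IsChildOrder

variable [Finite V] {T : ParentTree V} {cl : V → List V} (hcl : T.IsChildOrder cl)
include hcl

theorem preorderAux_eq_of_ncard_desc_le {n m : ℕ} {w : V}
    (hn : (T.desc w).ncard ≤ n) (hm : (T.desc w).ncard ≤ m) :
    preorderAux cl n w = preorderAux cl m w := by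
  induction n generalizing m w with
  | zero => exact absurd hn (T.ncard_desc_pos w).not_ge
  | succ n ih =>
    obtain _ | m := m
    · exact absurd hm (T.ncard_desc_pos w).not_ge
    refine congrArg (w :: ·) (List.flatMap_congr fun c hc => ?_)
    have hlt := T.ncard_desc_lt_of_mem_children ((hcl w).2 c |>.1 hc)
    exact ih (by omega) (by omega)

theorem mem_preorderAux_iff {n : ℕ} {w x : V} (hn : (T.desc w).ncard ≤ n) :
    x ∈ preorderAux cl n w ↔ x ∈ T.desc w := by
  induction n generalizing w with
  | zero => exact absurd hn (T.ncard_desc_pos w).not_ge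
  | succ n ih =>
    rw [T.desc_eq_insert_biUnion_children w]
    simp only [preorderAux, List.mem_cons, List.mem_flatMap, Set.mem_insert_iff,
      Set.mem_iUnion, exists_prop]
    refine or_congr Iff.rfl (exists_congr fun c => ?_)
    rw [(hcl w).2 c]
    refine and_congr_right fun hc => ih ?_
    have := T.ncard_desc_lt_of_mem_children hc
    omega

theorem nodup_preorderAux {n : ℕ} {w : V} (hn : (T.desc w).ncard ≤ n) :
    (preorderAux cl n w).Nodup := by
  induction n generalizing w with
  | zero => exact List.nodup_singleton w
  | succ n ih =>
    have hchild : ∀ c ∈ cl w, c ∈ T.children w := fun c => ((hcl w).2 c).1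
    have hn' : ∀ c ∈ cl w, (T.desc c).ncard ≤ n := fun c hc => by
      have := T.ncard_desc_lt_of_mem_children (hchild c hc)
      omega
    have hmem : ∀ c ∈ cl w, ∀ x, x ∈ preorderAux cl n c ↔ x ∈ T.desc c := fun c hc x =>
      mem_preorderAux_iff hcl (hn' c hc)
    refine List.nodup_cons.2
      ⟨fun hw => ?_, List.nodup_flatMap.2 ⟨fun c hc => ih (hn' c hc), ?_⟩⟩
    · obtain ⟨c, hc, hwc⟩ := List.mem_flatMap.1 hw
      exact T.not_mem_desc_of_mem_children (hchild c hc) ((hmem c hc w).1 hwc)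
    · refine (hcl w).1.imp_of_mem fun {c c'} hc hc' hne => List.disjoint_left.2 fun _ hx hx' => ?_
      exact hne (T.eq_of_mem_desc_of_mem_children (hchild c hc) (hchild c' hc')
        ((hmem c hc _).1 hx) ((hmem c' hc' _).1 hx'))

theorem mem_preorder_iff {w x : V} : x ∈ preorder cl w ↔ x ∈ T.desc w :=
  mem_preorderAux_iff hcl (Set.ncard_le_card _)

theorem nodup_preorder (w : V) : (preorder cl w).Nodup :=
  nodup_preorderAux hcl (Set.ncard_le_card _)

theorem listSet_preorder (w : V) : listSet (preorder cl w) = T.desc w :=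
  Set.ext fun _ => hcl.mem_preorder_iff

theorem preorder_infix_of_mem_children {c w : V} (hc : c ∈ T.children w) :
    preorder cl c <:+: preorder cl w := by
  have hlt := T.ncard_desc_lt_of_mem_children hc
  have hle := Set.ncard_le_card (T.desc w)
  obtain ⟨n, hn⟩ : ∃ n, Nat.card V = n + 1 := Nat.exists_eq_add_one.2 (by omega)
  have hc' : preorder cl c = preorderAux cl n c :=
    preorderAux_eq_of_ncard_desc_le hcl (Set.ncard_le_card _) (by omega)
  rw [hc', preorder, hn, preorderAux]
  exact List.infix_cons (List.infix_flatMap_of_mem (((hcl w).2 c).2 hc) _)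

theorem preorder_infix_of_mem_desc {x w : V} (hx : x ∈ T.desc w) :
    preorder cl x <:+: preorder cl w := by
  obtain ⟨k, hk⟩ := hx
  induction k generalizing x with
  | zero => rw [← hk]; exact List.infix_refl _
  | succ k ih =>
    refine List.IsInfix.trans ?_ (ih hk)
    by_cases hx : T.parent x = x
    · rw [hx]
    · exact hcl.preorder_infix_of_mem_children ⟨rfl, Ne.symm hx⟩

theorem isHamCycle_preorder_root : IsHamCycle (preorder cl T.root) :=
  ⟨hcl.nodup_preorder _, fun x => hcl.mem_preorder_iff.2 (T.reaches_root x)⟩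

theorem cycleConforms_preorder_root : CycleConforms T (preorder cl T.root) := fun w => by
  rw [← hcl.listSet_preorder w]
  exact isCyclicArc_listSet_of_infix (hcl.preorder_infix_of_mem_desc (T.reaches_root w))
    (hcl.nodup_preorder w)

theorem exists_cons_infix_preorder_root {w : V} (hw : w ≠ T.root) :
    ∃ p ∉ T.desc w, p :: preorder cl w <:+: preorder cl T.root := by
  obtain ⟨s, t, hst⟩ := hcl.preorder_infix_of_mem_desc (T.reaches_root w)
  obtain ⟨l, hl⟩ := preorderAux_eq_cons (cl := cl) (Nat.card V) w
  obtain ⟨l₀, hl₀⟩ := preorderAux_eq_cons (cl := cl) (Nat.card V) T.root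
  rcases List.eq_nil_or_concat s with rfl | ⟨s', p, rfl⟩
  · simp only [preorder, hl, hl₀, List.nil_append, List.cons_append, List.cons.injEq] at hst
    exact absurd hst.1 hw
  have hnd := hcl.nodup_preorder T.root
  rw [← hst, List.concat_eq_append, List.append_assoc, List.nodup_append] at hnd
  refine ⟨p, fun hp => ?_, s', t, ?_⟩
  · exact hnd.2.2 p (by simp) p (by simp [hcl.mem_preorder_iff.2 hp]) rfl
  · rw [← hst, List.concat_eq_append]
    simp

end IsChildOrder

end ParentTree

theorem stmt10_general {V : Type} [Fintype V]
    (T T₁ : ParentTree V) (u v : V) (hv : v ∈ T.children u)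
    (A : Set V) (hA : A ⊆ T.children v) (hAne : A.Nonempty)
    (hAproper : A ≠ T.children v)
    (hpar : ∀ w : V, (w ∈ A → T₁.parent w = u) ∧
      (w ∉ A → T₁.parent w = T.parent w)) :
    ∃ h : List V, IsHamCycle h ∧ CycleConforms T h ∧ ¬ CycleConforms T₁ h := by
  classical
  obtain ⟨a, haA⟩ := hAne
  obtain ⟨b, hbv, hbA⟩ := Set.exists_of_ssubset (hA.ssubset_of_ne hAproper)
  have hu : u ∉ T.desc v := T.not_mem_desc_of_mem_children hv
  have hsub : T₁.desc v ⊆ T.desc v := by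
    refine T.desc_subset_desc_of_parent_eq_or_not_mem_desc fun x => ?_
    by_cases hx : x ∈ A
    · exact Or.inr ((hpar x).1 hx ▸ hu)
    · exact Or.inl ((hpar x).2 hx)
  have ha : a ∉ T₁.desc v := fun ha =>
    hu (hsub ((hpar a).1 haA ▸ T₁.parent_mem_desc_of_mem_desc ha (hA haA).2))
  have hb : b ∈ T₁.desc v := ⟨1, ((hpar b).2 hbA).trans hbv.1⟩
  obtain ⟨cl, hcl, hfirst⟩ := T.exists_isChildOrder_head a
  set h := ParentTree.preorder cl T.root
  refine ⟨h, hcl.isHamCycle_preorder_root, hcl.cycleConforms_preorder_root, fun hconf => ?_⟩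
  obtain ⟨l, hcl_v⟩ := hfirst v (hA haA)
  obtain ⟨l', hl'⟩ := ParentTree.preorder_eq_cons_cons hcl_v
  obtain ⟨p, hp, hpv⟩ := hcl.exists_cons_infix_preorder_root (T.ne_root_of_mem_children hv)
  rw [hl'] at hpv
  have hvh : v ∈ h := hcl.isHamCycle_preorder_root.2 v
  obtain ⟨hnext, hprev⟩ := List.next_eq_and_prev_eq_of_infix (hcl.nodup_preorder T.root)
    ((List.prefix_append [p, v, a] l').isInfix.trans hpv) hvh
  have h1 : 1 < (T₁.desc v).ncard :=
    (Set.one_lt_ncard_iff (Set.toFinite _)).2 ⟨v, b, T₁.mem_desc_self v, hb, hbv.2.symm⟩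
  rcases (hconf v).next_mem_or_prev_mem (hcl.nodup_preorder T.root) h1 hvh (T₁.mem_desc_self v)
    with hmem | hmem
  · exact ha (hnext ▸ hmem)
  · exact hp (hsub (hprev ▸ hmem))

/-- The degree-increasing operation cannot be performed partially: if only the
children in a nonempty proper subset `A ⊊ C(v)` are redefined to be children
of `u`, then some Hamiltonian cycle conforms to `T` but not to `T₁`. -/
theorem stmt10 {V X : Type} [Fintype V] [MetricSpace X]
    (hn : 3 ≤ Fintype.card V) (f : V → X) (hf : Function.Injective f)
    (T T₁ : ParentTree V) (u v : V) (hv : v ∈ T.children u)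
    (hCv : (T.children v).Nonempty)
    (A : Set V) (hA : A ⊆ T.children v) (hAne : A.Nonempty)
    (hAproper : A ≠ T.children v)
    (hroot : T₁.root = T.root)
    (hpar : ∀ w : V, (w ∈ A → T₁.parent w = u) ∧
      (w ∉ A → T₁.parent w = T.parent w)) :
    ∃ h : List V, IsHamCycle h ∧ CycleConforms T h ∧ ¬ CycleConforms T₁ h :=
  stmt10_general T T₁ u v hv A hA hAne hAproper hpar
end

section
/- The minimum weight of a Hamiltonian cycle on S = V ∪ {r} conforming to the star T equals n + 1 if and only if G contains a Hamiltonian path. (Consequently, the minimum-weight double-tree shortcutting problem for general metric instances encodes the Hamiltonian path problem.) -/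
/-- The metric on `S = V ∪ {r}` (with `r = none`) induced by the graph `G`:
`dist(r,x) = 1`, and for distinct `x, y ∈ V`, `dist(x,y) = 1` if `x,y` are
adjacent in `G` and `2` otherwise. -/
noncomputable def gDist {V : Type} [DecidableEq V] (G : SimpleGraph V)
    [DecidableRel G.Adj] : Option V → Option V → ℝ
  | none, none => 0
  | none, some _ => 1
  | some _, none => 1
  | some x, some y => if x = y then 0 else if G.Adj x y then 1 else 2

/-- The weight of a cyclic ordering with respect to a distance function. -/
noncomputable def cycleWeightD {V : Type} (d : V → V → ℝ) (h : List V) : ℝ :=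
  ((h.zip (h.rotate 1)).map fun p => d p.1 p.2).sum

/-!
Every Hamiltonian cycle on `S` conforms to the star, and rotating it so that it starts at `r`
writes it as `r, v₁, …, vₙ`. Its `n + 1` steps are between distinct points and so cost `1` or `2`;
hence its weight is at least `n + 1`, and anything below `n + 2` forces every step to cost `1`,
which says precisely that `v₁, …, vₙ` is a Hamiltonian path of `G`.
-/

open List

section CycleWeight

variable {α β : Type}

theorem cycleWeightD_eq_sum_zipWith (d : α → α → ℝ) (l : List α) :
    cycleWeightD d l = (zipWith d l (l.rotate 1)).sum := by
  simp [cycleWeightD, List.zip]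

theorem cycleWeightD_rotate (d : α → α → ℝ) (l : List α) (k : ℕ) :
    cycleWeightD d (l.rotate k) = cycleWeightD d l := by
  rw [cycleWeightD_eq_sum_zipWith, cycleWeightD_eq_sum_zipWith, rotate_rotate, add_comm,
    ← rotate_rotate, ← zipWith_rotate_distrib _ _ _ _ (length_rotate l 1).symm]
  exact (rotate_perm _ k).sum_eq

theorem cycleWeightD_cons (d : α → α → ℝ) (a : α) (l : List α) :
    cycleWeightD d (a :: l) = (zipWith d (a :: l) (l ++ [a])).sum := by
  rw [cycleWeightD_eq_sum_zipWith, rotate_cons_succ, rotate_zero]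

namespace List.Forall₂

variable {d : α → β → ℝ} {l₁ : List α} {l₂ : List β}

theorem length_le_sum_zipWith (h : Forall₂ (fun x y => 1 ≤ d x y) l₁ l₂) :
    (l₁.length : ℝ) ≤ (zipWith d l₁ l₂).sum := by
  induction h with
  | nil => simp
  | cons hab _ ih =>
    simp only [length_cons, zipWith_cons_cons, sum_cons, Nat.cast_add, Nat.cast_one]
    linarith

theorem sum_zipWith_eq_length (h : Forall₂ (fun x y => d x y = 1) l₁ l₂) :
    (zipWith d l₁ l₂).sum = l₁.length := by
  induction h with
  | nil => simp
  | cons hab _ ih => simp [hab, ih, add_comm]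

theorem eq_one_of_sum_zipWith_lt (h : Forall₂ (fun x y => d x y = 1 ∨ 2 ≤ d x y) l₁ l₂)
    (hsum : (zipWith d l₁ l₂).sum < l₁.length + 1) : Forall₂ (fun x y => d x y = 1) l₁ l₂ := by
  induction h with
  | nil => exact .nil
  | cons hab hrest ih =>
    simp only [length_cons, zipWith_cons_cons, sum_cons, Nat.cast_add, Nat.cast_one] at hsum
    have hlow :=
      (hrest.imp fun x y hxy => by rcases hxy with h | h <;> linarith).length_le_sum_zipWith
    rcases hab with hab | hab
    · exact .cons hab (ih (by linarith))
    · linarith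

end List.Forall₂

theorem forall₂_ne_cons_append_singleton {a : α} {l : List α} (hnd : (a :: l).Nodup)
    (hl : l ≠ []) : Forall₂ (· ≠ ·) (a :: l) (l ++ [a]) := by
  obtain ⟨b, l, rfl⟩ := exists_cons_of_ne_nil hl
  refine isChain_cons_append_singleton_iff_forall₂.1 (isChain_append.2 ?_)
  refine ⟨hnd.isChain, isChain_singleton a, ?_⟩
  rintro x hx _ ⟨⟩ rfl
  rw [getLast?_cons_cons] at hx
  exact (nodup_cons.1 hnd).1 (mem_of_mem_getLast? hx)

variable {d : α → α → ℝ} {a : α} {l : List α}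

theorem length_add_one_le_cycleWeightD (hd : ∀ x y, x ≠ y → 1 ≤ d x y) (hnd : (a :: l).Nodup)
    (hl : l ≠ []) : (l.length : ℝ) + 1 ≤ cycleWeightD d (a :: l) := by
  rw [cycleWeightD_cons]
  simpa using ((forall₂_ne_cons_append_singleton hnd hl).imp hd).length_le_sum_zipWith

theorem isChain_of_cycleWeightD_lt (hd : ∀ x y, x ≠ y → d x y = 1 ∨ 2 ≤ d x y)
    (hnd : (a :: l).Nodup) (hl : l ≠ []) (hw : cycleWeightD d (a :: l) < l.length + 2) :
    IsChain (fun x y => d x y = 1) (a :: l ++ [a]) := by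
  rw [cycleWeightD_cons] at hw
  refine isChain_cons_append_singleton_iff_forall₂.2 ?_
  refine ((forall₂_ne_cons_append_singleton hnd hl).imp hd).eq_one_of_sum_zipWith_lt ?_
  simp only [length_cons, Nat.cast_add, Nat.cast_one]
  linarith

theorem cycleWeightD_of_isChain (h : IsChain (fun x y => d x y = 1) (a :: l ++ [a])) :
    cycleWeightD d (a :: l) = l.length + 1 := by
  rw [cycleWeightD_cons, (isChain_cons_append_singleton_iff_forall₂.1 h).sum_zipWith_eq_length,
    length_cons, Nat.cast_succ]

end CycleWeight

section HamCycle

variable {α : Type}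

theorem length_eq_card_of_nodup_of_forall_mem [Fintype α] {l : List α} (hnd : l.Nodup)
    (hl : ∀ x, x ∈ l) : l.length = Fintype.card α := by
  classical
  rw [← toFinset_card_of_nodup hnd, ← Finset.card_univ]
  congr
  exact Finset.eq_univ_iff_forall.2 fun x => mem_toFinset.2 (hl x)

theorem IsHamCycle.rotate {h : List α} (hh : IsHamCycle h) (k : ℕ) : IsHamCycle (h.rotate k) :=
  ⟨nodup_rotate.2 hh.1, fun x => mem_rotate.2 (hh.2 x)⟩

theorem isCyclicArc_singleton {x : α} {h : List α} (hx : x ∈ h) : IsCyclicArc {x} h := by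
  obtain ⟨s, t, rfl⟩ := append_of_mem hx
  refine ⟨s.length, ?_⟩
  rw [rotate_append_length_eq, Set.ncard_singleton]
  ext y
  simp [listSet]

theorem IsHamCycle.isCyclicArc_univ [Fintype α] {h : List α} (hh : IsHamCycle h) :
    IsCyclicArc Set.univ h := by
  refine ⟨0, ?_⟩
  rw [rotate_zero, Set.ncard_univ, Nat.card_eq_fintype_card,
    ← length_eq_card_of_nodup_of_forall_mem hh.1 hh.2, take_length]
  ext y
  simp [listSet, hh.2 y]

namespace ParentTree

variable {T : ParentTree α} {r : α}

theorem desc_eq_univ_of_forall_parent_eq (hpar : ∀ w, T.parent w = r) : T.desc r = Set.univ :=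
  Set.eq_univ_of_forall fun b => ⟨1, hpar b⟩

theorem desc_eq_singleton_of_forall_parent_eq (hpar : ∀ w, T.parent w = r) {v : α} (hv : v ≠ r) :
    T.desc v = {v} := by
  ext b
  refine ⟨fun ⟨k, hk⟩ => ?_, fun hb => ⟨0, hb⟩⟩
  cases k with
  | zero => exact hk
  | succ k => exact absurd (hk.symm.trans (by rw [Function.iterate_succ_apply', hpar])) hv

end ParentTree

theorem IsHamCycle.cycleConforms [Fintype α] {h : List α} (hh : IsHamCycle h) {T : ParentTree α}
    {r : α} (hpar : ∀ w, T.parent w = r) : CycleConforms T h := by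
  intro v
  by_cases hv : v = r
  · rw [hv, T.desc_eq_univ_of_forall_parent_eq hpar]
    exact hh.isCyclicArc_univ
  · rw [T.desc_eq_singleton_of_forall_parent_eq hpar hv]
    exact isCyclicArc_singleton (hh.2 v)

end HamCycle

section GraphInstance

variable {V : Type}

theorem IsHamCycle.exists_rotate_eq_none_cons {h : List (Option V)} (hh : IsHamCycle h) :
    ∃ k, ∃ p : List V, h.rotate k = none :: p.map some ∧ p.Nodup ∧ ∀ v, v ∈ p := by
  obtain ⟨s, t, hst⟩ := append_of_mem (hh.2 none)
  have hrot : IsHamCycle (none :: (t ++ s)) := by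
    simpa [hst, rotate_append_length_eq] using hh.rotate s.length
  obtain ⟨p, hp⟩ : t ++ s ∈ Set.range (map (some : V → Option V)) := by
    rw [Set.range_list_map]
    intro x hx
    obtain ⟨v, rfl⟩ := Option.ne_none_iff_exists.1 fun hx' => (nodup_cons.1 hrot.1).1 (hx' ▸ hx)
    exact ⟨v, rfl⟩
  rw [← hp] at hrot
  refine ⟨s.length, p, by rw [hst, rotate_append_length_eq, hp]; rfl,
    (nodup_cons.1 hrot.1).2.of_map _, fun v => ?_⟩
  simpa using hrot.2 (some v)

theorem nodup_none_cons_map_some {p : List V} (hnd : p.Nodup) : (none :: p.map some).Nodup :=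
  nodup_cons.2 ⟨by simp, hnd.map (Option.some_injective V)⟩

theorem isHamCycle_none_cons {p : List V} (hnd : p.Nodup) (hp : ∀ v, v ∈ p) :
    IsHamCycle (none :: p.map some) := by
  refine ⟨nodup_none_cons_map_some hnd, ?_⟩
  rintro (_ | v) <;> simp [hp]

theorem setOf_cycleWeightD_conforms_eq [Fintype V] {T : ParentTree (Option V)}
    (hpar : ∀ w, T.parent w = none) (d : Option V → Option V → ℝ) :
    {w | ∃ h : List (Option V), IsHamCycle h ∧ CycleConforms T h ∧ cycleWeightD d h = w} =
      {w | ∃ p : List V, p.Nodup ∧ (∀ v, v ∈ p) ∧ cycleWeightD d (none :: p.map some) = w} := by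
  ext w
  constructor
  · rintro ⟨h, hh, -, rfl⟩
    obtain ⟨k, p, hk, hnd, hp⟩ := hh.exists_rotate_eq_none_cons
    exact ⟨p, hnd, hp, by rw [← hk, cycleWeightD_rotate]⟩
  · rintro ⟨p, hnd, hp, rfl⟩
    have hh := isHamCycle_none_cons hnd hp
    exact ⟨_, hh, hh.cycleConforms hpar, rfl⟩

variable [DecidableEq V] (G : SimpleGraph V) [DecidableRel G.Adj]

theorem gDist_eq_one_or_two_le {x y : Option V} (hxy : x ≠ y) :
    gDist G x y = 1 ∨ 2 ≤ gDist G x y := by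
  match x, y with
  | none, none => exact absurd rfl hxy
  | none, some _ | some _, none => exact .inl rfl
  | some v, some w =>
    have hvw : v ≠ w := fun h => hxy (congrArg some h)
    by_cases h : G.Adj v w <;> simp [gDist, hvw, h]

theorem gDist_some_eq_one_iff {v w : V} : gDist G (some v) (some w) = 1 ↔ G.Adj v w := by
  by_cases hvw : v = w
  · subst hvw
    simp [gDist]
  · by_cases h : G.Adj v w <;> simp [gDist, hvw, h]

variable {G} {p : List V}

theorem length_add_one_le_cycleWeightD_none_cons (hnd : p.Nodup) (hp : p ≠ []) :
    (p.length : ℝ) + 1 ≤ cycleWeightD (gDist G) (none :: p.map some) := by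
  simpa using length_add_one_le_cycleWeightD
    (fun x y hxy => by rcases gDist_eq_one_or_two_le G hxy with h | h <;> linarith)
    (nodup_none_cons_map_some hnd) (by simpa using hp)

theorem isChain_adj_of_cycleWeightD_none_cons_lt (hnd : p.Nodup) (hp : p ≠ [])
    (hw : cycleWeightD (gDist G) (none :: p.map some) < p.length + 2) : p.IsChain G.Adj := by
  have hclosed := isChain_of_cycleWeightD_lt (fun x y => gDist_eq_one_or_two_le G)
    (nodup_none_cons_map_some hnd) (by simpa using hp)
    (by simpa using hw)
  have hinner : (p.map some).IsChain fun x y => gDist G x y = 1 :=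
    hclosed.infix ⟨[none], [none], rfl⟩
  exact ((isChain_map some).1 hinner).imp fun _ _ => (gDist_some_eq_one_iff G).1

theorem cycleWeightD_none_cons_of_isChain_adj (hp : p ≠ []) (hadj : p.IsChain G.Adj) :
    cycleWeightD (gDist G) (none :: p.map some) = p.length + 1 := by
  have hclosed : IsChain (fun x y => gDist G x y = 1) (none :: p.map some ++ [none]) := by
    rw [cons_append, isChain_cons, isChain_append, isChain_map,
      head?_append_of_ne_nil _ (by simpa using hp)]
    refine ⟨?_, hadj.imp fun _ _ => (gDist_some_eq_one_iff G).2, isChain_singleton _, ?_⟩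
    · intro y hy
      obtain ⟨v, -, rfl⟩ := mem_map.1 (mem_of_mem_head? hy)
      rfl
    · rintro x hx _ ⟨⟩
      obtain ⟨v, -, rfl⟩ := mem_map.1 (mem_of_mem_getLast? hx)
      rfl
  simpa using cycleWeightD_of_isChain hclosed

end GraphInstance

theorem stmt12_general {V : Type} [Fintype V] [DecidableEq V] (hn : 3 ≤ Fintype.card V)
    (G : SimpleGraph V) [DecidableRel G.Adj]
    (T : ParentTree (Option V))
    (hpar : ∀ w : Option V, T.parent w = none) :
    sInf {w | ∃ h : List (Option V), IsHamCycle h ∧ CycleConforms T h ∧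
        cycleWeightD (gDist G) h = w} = Fintype.card V + 1 ↔
    ∃ p : List V, p.Nodup ∧ (∀ x : V, x ∈ p) ∧ p.Chain' G.Adj := by
  have hlen {p : List V} (hnd : p.Nodup) (hp : ∀ x, x ∈ p) : p.length = Fintype.card V :=
    length_eq_card_of_nodup_of_forall_mem hnd hp
  have hne {p : List V} (hnd : p.Nodup) (hp : ∀ x, x ∈ p) : p ≠ [] :=
    ne_nil_of_length_pos (by rw [hlen hnd hp]; omega)
  rw [setOf_cycleWeightD_conforms_eq hpar]
  constructor
  · intro hInf
    have hlt := hInf.trans_lt (lt_add_one ((Fintype.card V : ℝ) + 1))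
    obtain ⟨_, ⟨p, hnd, hp, rfl⟩, hw⟩ := exists_lt_of_csInf_lt
      (by exact ⟨_, Finset.univ.toList, Finset.nodup_toList _, by simp, rfl⟩) hlt
    refine ⟨p, hnd, hp, isChain_adj_of_cycleWeightD_none_cons_lt hnd (hne hnd hp) ?_⟩
    rw [hlen hnd hp]
    linarith
  · rintro ⟨p, hnd, hp, hadj⟩
    refine IsLeast.csInf_eq ⟨⟨p, hnd, hp, ?_⟩, ?_⟩
    · rw [cycleWeightD_none_cons_of_isChain_adj (hne hnd hp) hadj, hlen hnd hp]
    · rintro _ ⟨q, hqnd, hq, rfl⟩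
      rw [← hlen hqnd hq]
      exact length_add_one_le_cycleWeightD_none_cons hqnd (hne hqnd hq)

/-- For the 1-2 metric instance built from a graph `G` together with an extra
point `r`, the minimum weight of a Hamiltonian cycle conforming to the star `T`
rooted at `r` equals `n + 1` if and only if `G` contains a Hamiltonian path. -/
theorem stmt12 {V : Type} [Fintype V] [DecidableEq V] (hn : 3 ≤ Fintype.card V)
    (G : SimpleGraph V) [DecidableRel G.Adj]
    (T : ParentTree (Option V))
    (hroot : T.root = none) (hpar : ∀ w : Option V, T.parent w = none) :
    sInf {w | ∃ h : List (Option V), IsHamCycle h ∧ CycleConforms T h ∧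
        cycleWeightD (gDist G) h = w} = Fintype.card V + 1 ↔
    ∃ p : List V, p.Nodup ∧ (∀ x : V, x ∈ p) ∧ p.Chain' G.Adj :=
  stmt12_general hn G T hpar
end

section
/- If a and b are two distinct neighbours of a vertex v in T, then the angle ∠avb between the segments va and vb is at least π/3. -/
/-- The total weight of the tree `T`: the sum of distances over its edges. -/
noncomputable def treeWeight {V X : Type} [Fintype V] [DecidableEq V] [MetricSpace X]
    (T : ParentTree V) (f : V → X) : ℝ :=
  ∑ v ∈ Finset.univ.filter (fun v => v ≠ T.root), dist (f v) (f (T.parent v))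

/-- `T` is a minimum spanning tree: among all trees with the same vertex set it
minimizes the sum of distances over its edges. -/
def IsMST {V X : Type} [Fintype V] [DecidableEq V] [MetricSpace X]
    (T : ParentTree V) (f : V → X) : Prop :=
  ∀ T' : ParentTree V, treeWeight T f ≤ treeWeight T' f

/-- `a` and `v` are neighbours in `T`, i.e. joined by an edge of `T`. -/
def Nbr {V : Type} (T : ParentTree V) (a v : V) : Prop :=
  a ≠ v ∧ (T.parent a = v ∨ T.parent v = a)

/- ### Auxiliary machinery -/

set_option linter.unusedSectionVars false

namespace ParentTree

variable {V : Type} [DecidableEq V]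

lemma root_fixed (T : ParentTree V) (k : ℕ) : T.parent^[k] T.root = T.root :=
  Function.iterate_fixed T.parent_root k

lemma cycle_eq_root (T : ParentTree V) {x : V} {k : ℕ} (hk : 1 ≤ k)
    (h : T.parent^[k] x = x) : x = T.root := by
  obtain ⟨n, hn⟩ := T.reaches_root x
  have hm : ∀ m, T.parent^[k * m] x = x := by
    intro m
    induction m with
    | zero => simp
    | succ m ih =>
      rw [Nat.mul_succ, Function.iterate_add_apply, h, ih]
  have hge : n ≤ k * n := Nat.le_mul_of_pos_left n hk
  have : T.parent^[k * n] x = T.root := by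
    have : T.parent^[k * n - n + n] x = T.parent^[k * n - n] T.root := by
      rw [Function.iterate_add_apply, hn]
    rw [Nat.sub_add_cancel hge] at this
    rw [this, root_fixed]
  rw [hm n] at this
  exact this

lemma no_return (T : ParentTree V) {a v : V} (hav : T.parent a = v) (hne : a ≠ v) :
    ∀ k, T.parent^[k] v ≠ a := by
  intro k hk
  have hcyc : T.parent^[k + 1] v = v := by
    rw [Function.iterate_succ_apply', hk, hav]
  have hroot : v = T.root := T.cycle_eq_root (Nat.le_add_left 1 k) hcyc
  rw [hroot, root_fixed] at hk
  exact hne (hroot.trans hk).symm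

lemma ne_root (T : ParentTree V) {x : V} (h : T.parent x ≠ x) : x ≠ T.root :=
  fun hr => h (hr ▸ T.parent_root)

/-- Rewiring a tree: change the parent of `x` to `y`, provided `x` is not the
root and `x` is not on the path from `y` to the root. -/
def rewire (T : ParentTree V) (x y : V) (hx : x ≠ T.root)
    (hy : ∀ k, T.parent^[k] y ≠ x) : ParentTree V where
  root := T.root
  parent := Function.update T.parent x y
  parent_root := by
    rw [Function.update_of_ne (Ne.symm hx)]
    exact T.parent_root
  reaches_root := by
    have horb : ∀ k, (Function.update T.parent x y)^[k] y = T.parent^[k] y := by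
      intro k
      induction k with
      | zero => rfl
      | succ k ih =>
        rw [Function.iterate_succ_apply', ih, Function.iterate_succ_apply',
          Function.update_of_ne (hy k)]
    have hyr : ∃ k, (Function.update T.parent x y)^[k] y = T.root := by
      obtain ⟨n, hn⟩ := T.reaches_root y
      exact ⟨n, (horb n).trans hn⟩
    have main : ∀ n w, T.parent^[n] w = T.root →
        ∃ k, (Function.update T.parent x y)^[k] w = T.root := by
      intro n
      induction n with
      | zero => intro w hw; exact ⟨0, hw⟩
      | succ n ih =>
        intro w hw
        by_cases hwx : w = x
        · subst hwx
          obtain ⟨k, hk⟩ := hyr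
          exact ⟨k + 1, by rw [Function.iterate_succ_apply, Function.update_self]; exact hk⟩
        · obtain ⟨k, hk⟩ := ih (T.parent w) (by rw [← Function.iterate_succ_apply]; exact hw)
          exact ⟨k + 1, by rw [Function.iterate_succ_apply, Function.update_of_ne hwx]; exact hk⟩
    intro w
    obtain ⟨n, hn⟩ := T.reaches_root w
    exact main n w hn

@[simp] lemma rewire_root (T : ParentTree V) (x y : V) (hx hy) :
    (T.rewire x y hx hy).root = T.root := rfl

@[simp] lemma rewire_parent (T : ParentTree V) (x y : V) (hx hy) :
    (T.rewire x y hx hy).parent = Function.update T.parent x y := rfl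

end ParentTree

lemma treeWeight_rewire {V X : Type} [Fintype V] [DecidableEq V] [MetricSpace X]
    (T : ParentTree V) (f : V → X) (x y : V) (hx : x ≠ T.root)
    (hy : ∀ k, T.parent^[k] y ≠ x) :
    treeWeight (T.rewire x y hx hy) f
      = treeWeight T f - dist (f x) (f (T.parent x)) + dist (f x) (f y) := by
  unfold treeWeight
  have hmem : x ∈ Finset.univ.filter (fun v => v ≠ T.root) := by
    simp [hx]
  rw [ParentTree.rewire_root]
  rw [← Finset.add_sum_erase _ _ hmem, ← Finset.add_sum_erase _ _ hmem]
  have herase : ∑ v ∈ (Finset.univ.filter (fun v => v ≠ T.root)).erase x,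
      dist (f v) (f ((T.rewire x y hx hy).parent v))
      = ∑ v ∈ (Finset.univ.filter (fun v => v ≠ T.root)).erase x,
      dist (f v) (f (T.parent v)) := by
    apply Finset.sum_congr rfl
    intro v hv
    rw [ParentTree.rewire_parent, Function.update_of_ne (Finset.ne_of_mem_erase hv)]
  rw [herase, ParentTree.rewire_parent, Function.update_self]
  ring

lemma geo_key (p q r : EuclideanSpace ℝ (Fin 2)) (hpq : p ≠ q) (hrq : r ≠ q)
    (hle : dist r q ≤ dist p q) (hang : EuclideanGeometry.angle p q r < Real.pi / 3) :
    dist p r < dist p q := by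
  have hlaw := EuclideanGeometry.law_cos p q r
  have h1 : (0:ℝ) < dist p q := dist_pos.2 hpq
  have h2 : (0:ℝ) < dist r q := dist_pos.2 hrq
  have hcos : Real.cos (EuclideanGeometry.angle p q r) > 1 / 2 := by
    have h3 : EuclideanGeometry.angle p q r ∈ Set.Icc 0 Real.pi :=
      ⟨EuclideanGeometry.angle_nonneg _ _ _, EuclideanGeometry.angle_le_pi _ _ _⟩
    have h4 : (Real.pi / 3 : ℝ) ∈ Set.Icc (0:ℝ) Real.pi := by
      constructor <;> nlinarith [Real.pi_pos]
    have := Real.strictAntiOn_cos h3 h4 hang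
    rw [Real.cos_pi_div_three] at this
    linarith
  have key : dist p r * dist p r < dist p q * dist p q := by
    nlinarith [mul_pos h1 h2, mul_le_mul_of_nonneg_right hle h2.le]
  nlinarith [dist_nonneg (x := p) (y := r)]

lemma mst_key {V : Type} [Fintype V] [DecidableEq V]
    (f : V → EuclideanSpace ℝ (Fin 2)) (hf : Function.Injective f)
    (T : ParentTree V) (hmst : IsMST T f)
    (a b v : V) (ha : Nbr T a v) (hb : Nbr T b v) (hab : a ≠ b)
    (hle : dist (f b) (f v) ≤ dist (f a) (f v))
    (hang : EuclideanGeometry.angle (f a) (f v) (f b) < Real.pi / 3) : False := by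
  have hd : dist (f a) (f b) < dist (f a) (f v) :=
    geo_key (f a) (f v) (f b) (fun h => ha.1 (hf h)) (fun h => hb.1 (hf h)) hle hang
  rcases ha.2 with h1 | h1
  · -- the edge `a–v` is stored as `parent a = v`
    have hvnret : ∀ k, T.parent^[k] v ≠ a := T.no_return h1 ha.1
    have hbnret : ∀ k, T.parent^[k] b ≠ a := by
      intro k
      rcases hb.2 with h2 | h2
      · cases k with
        | zero => simpa using Ne.symm hab
        | succ j =>
          rw [Function.iterate_succ_apply, h2]
          exact hvnret j
      · intro hk
        exact hvnret (k + 1) (by rw [Function.iterate_succ_apply, h2]; exact hk)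
    have har : a ≠ T.root := T.ne_root (by rw [h1]; exact Ne.symm ha.1)
    have hW := hmst (T.rewire a b har hbnret)
    rw [treeWeight_rewire, h1] at hW
    linarith
  · -- the edge `a–v` is stored as `parent v = a`
    have hpb : T.parent b = v := by
      rcases hb.2 with h2 | h2
      · exact h2
      · exact absurd (h1.symm.trans h2) hab
    have hanv : ∀ k, T.parent^[k] a ≠ v := T.no_return h1 (Ne.symm ha.1)
    have hanb : ∀ k, T.parent^[k] a ≠ b := by
      intro k hk
      exact hanv (k + 1) (by rw [Function.iterate_succ_apply', hk, hpb])
    have hbr : b ≠ T.root := T.ne_root (by rw [hpb]; exact Ne.symm hb.1)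
    have horb1 : ∀ k, (T.rewire b a hbr hanb).parent^[k] a = T.parent^[k] a := by
      intro k
      induction k with
      | zero => rfl
      | succ k ih =>
        rw [Function.iterate_succ_apply', ih, Function.iterate_succ_apply',
          ParentTree.rewire_parent, Function.update_of_ne (hanb k)]
    have hvr1 : v ≠ (T.rewire b a hbr hanb).root := by
      rw [ParentTree.rewire_root]
      exact T.ne_root (by rw [h1]; exact ha.1)
    have hb1 : ∀ k, (T.rewire b a hbr hanb).parent^[k] b ≠ v := by
      intro k
      cases k with
      | zero => simpa using hb.1
      | succ j =>
        rw [Function.iterate_succ_apply]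
        have hba : (T.rewire b a hbr hanb).parent b = a := by
          rw [ParentTree.rewire_parent, Function.update_self]
        rw [hba, horb1 j]
        exact hanv j
    have hpv1 : (T.rewire b a hbr hanb).parent v = a := by
      rw [ParentTree.rewire_parent, Function.update_of_ne (Ne.symm hb.1), h1]
    have hW := hmst ((T.rewire b a hbr hanb).rewire v b hvr1 hb1)
    rw [treeWeight_rewire, treeWeight_rewire, hpv1, hpb] at hW
    have e1 := dist_comm (f b) (f v)
    have e2 := dist_comm (f b) (f a)
    have e3 := dist_comm (f v) (f a)
    linarith

/-- If `a` and `b` are two distinct neighbours of `v` in a minimum spanning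
tree of a finite planar Euclidean point set, then the angle `∠avb` is at least
`π/3`. -/
theorem stmt15 {V : Type} [Fintype V] [DecidableEq V]
    (hn : 3 ≤ Fintype.card V) (f : V → EuclideanSpace ℝ (Fin 2))
    (hf : Function.Injective f)
    (T : ParentTree V) (hmst : IsMST T f)
    (a b v : V) (ha : Nbr T a v) (hb : Nbr T b v) (hab : a ≠ b) :
    Real.pi / 3 ≤ EuclideanGeometry.angle (f a) (f v) (f b) := by
  by_contra hc
  push_neg at hc
  rcases le_total (dist (f b) (f v)) (dist (f a) (f v)) with h | h
  · exact mst_key f hf T hmst a b v ha hb hab h hc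
  · exact mst_key f hf T hmst b a v hb ha (Ne.symm hab) h
      (by rw [EuclideanGeometry.angle_comm]; exact hc)
end

section
/- Every vertex of T has at most 6 neighbours; that is, the maximum degree of a minimum spanning tree of a finite planar Euclidean point set is at most 6. -/
lemma Function.iterate_update_of_forall_ne {α : Type*} [DecidableEq α] (p : α → α) (a b : α)
    {k : ℕ} {w : α} (h : ∀ i < k, p^[i] w ≠ a) : (Function.update p a b)^[k] w = p^[k] w := by
  induction k generalizing w with
  | zero => rfl
  | succ k ih =>
    rw [Function.iterate_succ_apply, Function.iterate_succ_apply,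
      Function.update_of_ne (by simpa using h 0 k.succ_pos)]
    exact ih fun i hi => by simpa using h (i + 1) (Nat.succ_lt_succ hi)

namespace ParentTree

variable {V : Type} (T : ParentTree V)

lemma eq_root_of_iterate_eq_self {w : V} {k : ℕ} (hk : 0 < k) (hw : T.parent^[k] w = w) :
    w = T.root := by
  obtain ⟨m, hm⟩ := T.reaches_root w
  calc w = T.parent^[k * m] w := (Function.iterate_mul T.parent k m ▸
          Function.iterate_fixed hw m).symm
    _ = T.parent^[k * m - m] (T.parent^[m] w) := by
        rw [← Function.iterate_add_apply, Nat.sub_add_cancel (Nat.le_mul_of_pos_left m hk)]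
    _ = T.root := by rw [hm, Function.iterate_fixed T.parent_root]

lemma mem_desc_parent (u : V) : u ∈ T.desc (T.parent u) := ⟨1, rfl⟩

lemma desc_antisymm {u w : V} (huw : u ∈ T.desc w) (hwu : w ∈ T.desc u) : u = w := by
  obtain ⟨k, hk⟩ := huw
  obtain ⟨m, hm⟩ := hwu
  rcases Nat.eq_zero_or_pos (m + k) with hmk | hmk
  · obtain ⟨rfl, rfl⟩ : m = 0 ∧ k = 0 := by omega
    exact hk
  · have hroot := T.eq_root_of_iterate_eq_self hmk (by rw [Function.iterate_add_apply, hk, hm])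
    rw [← hk, hroot, Function.iterate_fixed T.parent_root]

lemma not_mem_desc_of_parent_eq {x y : V} (hxy : T.parent x = T.parent y) (hne : x ≠ y)
    (hx : T.parent x ≠ x) : y ∉ T.desc x := by
  rintro ⟨k, hk⟩
  obtain ⟨j, rfl⟩ : ∃ j, k = j + 1 :=
    Nat.exists_eq_succ_of_ne_zero fun h => hne (by subst h; exact hk.symm)
  rw [Function.iterate_succ_apply, ← hxy] at hk
  exact hx (T.desc_antisymm ⟨j, hk⟩ (T.mem_desc_parent x))

variable [DecidableEq V]

def reparent (a b : V) (hb : b ∉ T.desc a) : ParentTree V where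
  root := T.root
  parent := Function.update T.parent a b
  parent_root := by
    have hra : T.root ≠ a := fun h => hb (h ▸ T.reaches_root b)
    rw [Function.update_of_ne hra, T.parent_root]
  reaches_root w := by
    by_cases hdesc : ∃ k, T.parent^[k] w = a
    · obtain ⟨m, hm⟩ := T.reaches_root b
      refine ⟨m + (Nat.find hdesc + 1), ?_⟩
      rw [Function.iterate_add_apply, Function.iterate_succ_apply',
        Function.iterate_update_of_forall_ne _ _ _ fun i hi => Nat.find_min hdesc hi,
        Nat.find_spec hdesc, Function.update_self,
        Function.iterate_update_of_forall_ne _ _ _ fun i _ hi => hb ⟨i, hi⟩, hm]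
    · obtain ⟨m, hm⟩ := T.reaches_root w
      refine ⟨m, ?_⟩
      rw [Function.iterate_update_of_forall_ne _ _ _ fun i _ => not_exists.mp hdesc i, hm]

lemma reparent_parent (a b : V) (hb : b ∉ T.desc a) :
    (T.reparent a b hb).parent = Function.update T.parent a b := rfl

end ParentTree

section Exchange

variable {V X : Type} [Fintype V] [DecidableEq V] [MetricSpace X]

lemma treeWeight_reparent (T : ParentTree V) (f : V → X) (a b : V) (hb : b ∉ T.desc a) :
    treeWeight (T.reparent a b hb) f + dist (f a) (f (T.parent a))
      = treeWeight T f + dist (f a) (f b) := by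
  have ha : a ∈ Finset.univ.filter (fun v => v ≠ T.root) :=
    Finset.mem_filter.mpr ⟨Finset.mem_univ a, fun h => hb (h ▸ T.reaches_root b)⟩
  have hrest : ∀ w ∈ (Finset.univ.filter (fun v => v ≠ T.root)).erase a,
      dist (f w) (f ((T.reparent a b hb).parent w)) = dist (f w) (f (T.parent w)) := by
    intro w hw
    rw [T.reparent_parent, Function.update_of_ne (Finset.ne_of_mem_erase hw)]
  unfold treeWeight
  rw [show (T.reparent a b hb).root = T.root from rfl, ← Finset.add_sum_erase _ _ ha,
    ← Finset.add_sum_erase _ _ ha, Finset.sum_congr rfl hrest, T.reparent_parent,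
    Function.update_self]
  ring

namespace IsMST

variable {T : ParentTree V} {f : V → X}

lemma dist_parent_le (hmst : IsMST T f) {u w : V} (hw : w ∉ T.desc u) :
    dist (f u) (f (T.parent u)) ≤ dist (f u) (f w) := by
  have := treeWeight_reparent T f u w hw
  linarith [hmst (T.reparent u w hw)]

/-- Two exchanges along the path `u → p → g` trade the edge `p—g` for `u—g`. -/
lemma dist_le_of_parent_parent (hmst : IsMST T f) {u p g : V} (hup : T.parent u = p)
    (hpg : T.parent p = g) (hu : u ≠ p) (hp : p ≠ g) (hug : u ≠ g) :
    dist (f p) (f g) ≤ dist (f u) (f g) := by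
  have hg : g ∉ T.desc u := fun h => hug (T.desc_antisymm ⟨2, by simp [hup, hpg]⟩ h)
  set T₁ := T.reparent u g hg
  have hT₁u : T₁.parent u = g := by rw [T.reparent_parent, Function.update_self]
  have hT₁p : T₁.parent p = g := by rw [T.reparent_parent, Function.update_of_ne hu.symm, hpg]
  have hu₁ : u ∉ T₁.desc p :=
    T₁.not_mem_desc_of_parent_eq (hT₁p.trans hT₁u.symm) hu.symm (hT₁p ▸ hp.symm)
  have h₁ := treeWeight_reparent T f u g hg
  have h₂ := treeWeight_reparent T₁ f p u hu₁
  rw [hup] at h₁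
  rw [hT₁p] at h₂
  linarith [hmst (T₁.reparent p u hu₁), dist_comm (f u) (f p), dist_comm (f u) (f g)]

lemma dist_le_of_nbr (hmst : IsMST T f) {a b v : V} (hav : Nbr T a v) (hbv : Nbr T b v)
    (hab : a ≠ b) : dist (f a) (f v) ≤ dist (f a) (f b) := by
  obtain ⟨hav, hpa | hpv⟩ := hav <;> obtain ⟨hbv, hpb | hpv'⟩ := hbv
  · refine hpa ▸ hmst.dist_parent_le (T.not_mem_desc_of_parent_eq ?_ hab ?_)
    · rw [hpa, hpb]
    · rw [hpa]; exact hav.symm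
  · refine hpa ▸ hmst.dist_parent_le fun h => hab (T.desc_antisymm ⟨2, ?_⟩ h)
    simp [hpa, hpv']
  · rw [dist_comm (f a) (f v), dist_comm (f a) (f b)]
    exact hmst.dist_le_of_parent_parent hpb hpv hbv hav.symm hab.symm
  · exact absurd (hpv.symm.trans hpv') hab

end IsMST

end Exchange

open scoped InnerProductSpace

lemma abs_sub_lt_one_of_ceil_eq_ceil {x y : ℝ} (h : ⌈x⌉ = ⌈y⌉) : |x - y| < 1 := by
  have hx := Int.le_ceil x
  have hx' := Int.ceil_lt_add_one x
  have hy := Int.le_ceil y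
  have hy' := Int.ceil_lt_add_one y
  rw [h] at hx hx'
  rw [abs_sub_lt_iff]
  constructor <;> linarith

lemma Finset.card_le_of_le_abs_sub {ι : Type*} (s : Finset ι) (g : ι → ℝ) {a δ : ℝ} {n : ℕ}
    (hδ : 0 < δ) (hg : ∀ i ∈ s, g i ∈ Set.Ioc a (a + n * δ))
    (hsep : ∀ i ∈ s, ∀ j ∈ s, i ≠ j → δ ≤ |g i - g j|) : s.card ≤ n := by
  set bucket : ι → ℤ := fun i => ⌈(g i - a) / δ⌉
  have hmaps : ∀ i ∈ s, bucket i ∈ Finset.Icc (1 : ℤ) n := by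
    intro i hi
    obtain ⟨hlo, hhi⟩ := hg i hi
    rw [Finset.mem_Icc, Int.one_le_ceil_iff, Int.ceil_le, div_le_iff₀ hδ]
    exact ⟨div_pos (by linarith) hδ, by push_cast; linarith⟩
  have hinj : Set.InjOn bucket s := by
    intro i hi j hj hij
    by_contra hne
    have hlt := abs_sub_lt_one_of_ceil_eq_ceil hij
    rw [← sub_div, abs_div, abs_of_pos hδ, div_lt_one hδ, sub_sub_sub_cancel_right] at hlt
    exact (hsep i hi j hj hne).not_gt hlt
  simpa using Finset.card_le_card_of_injOn bucket hmaps hinj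

lemma two_real_inner_le_norm_mul_norm {E : Type*} [NormedAddCommGroup E] [InnerProductSpace ℝ E]
    {x y : E} (hx : ‖x‖ ≤ ‖x - y‖) (hy : ‖y‖ ≤ ‖x - y‖) : 2 * ⟪x, y⟫_ℝ ≤ ‖x‖ * ‖y‖ := by
  have hsq := norm_sub_sq_real x y
  have hx0 := norm_nonneg x
  have hy0 := norm_nonneg y
  rcases le_total ‖x‖ ‖y‖ with h | h <;> nlinarith

open Real

namespace Complex

lemma real_inner_eq_norm_mul_norm_mul_cos_arg_sub (z w : ℂ) :
    ⟪z, w⟫_ℝ = ‖z‖ * ‖w‖ * Real.cos (arg z - arg w) := by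
  rw [Complex.inner, Real.cos_sub]
  simp only [mul_re, conj_re, conj_im]
  rw [← norm_mul_cos_arg z, ← norm_mul_cos_arg w, ← norm_mul_sin_arg z, ← norm_mul_sin_arg w]
  ring

lemma pi_div_three_le_abs_arg_sub {z w : ℂ} (hz : z ≠ 0) (hw : w ≠ 0)
    (h : 2 * ⟪z, w⟫_ℝ ≤ ‖z‖ * ‖w‖) : π / 3 ≤ |arg z - arg w| := by
  by_contra! hlt
  have hcos : 1 / 2 < Real.cos (arg z - arg w) := by
    rw [← Real.cos_abs, ← Real.cos_pi_div_three]
    exact Real.cos_lt_cos_of_nonneg_of_le_pi (abs_nonneg _) (by linarith [pi_pos]) hlt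
  have hpos : 0 < ‖z‖ * ‖w‖ := mul_pos (norm_pos_iff.mpr hz) (norm_pos_iff.mpr hw)
  rw [real_inner_eq_norm_mul_norm_mul_cos_arg_sub] at h
  nlinarith

lemma card_le_six_of_norm_le_norm_sub {ι : Type*} (s : Finset ι) (z : ι → ℂ)
    (hz : ∀ i ∈ s, z i ≠ 0) (h : ∀ i ∈ s, ∀ j ∈ s, i ≠ j → ‖z i‖ ≤ ‖z i - z j‖) :
    s.card ≤ 6 := by
  refine s.card_le_of_le_abs_sub (arg ∘ z) (a := -π) (δ := π / 3) (by positivity) ?_ ?_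
  · intro i _
    refine ⟨neg_pi_lt_arg _, (arg_le_pi _).trans_eq ?_⟩
    push_cast
    ring
  · intro i hi j hj hij
    have hji := h j hj i hi hij.symm
    rw [norm_sub_rev] at hji
    exact pi_div_three_le_abs_arg_sub (hz i hi) (hz j hj)
      (two_real_inner_le_norm_mul_norm (h i hi j hj hij) hji)

end Complex

theorem stmt16_general {V : Type} [Fintype V] [DecidableEq V]
    (f : V → EuclideanSpace ℝ (Fin 2))
    (hf : Function.Injective f)
    (T : ParentTree V) (hmst : IsMST T f) (v : V) :
    {a : V | Nbr T a v}.ncard ≤ 6 := by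
  classical
  let e : EuclideanSpace ℝ (Fin 2) ≃ₗᵢ[ℝ] ℂ := Complex.orthonormalBasisOneI.repr.symm
  have hnorm : ∀ a b, ‖e (f a) - e (f b)‖ = dist (f a) (f b) := fun a b => by
    rw [← dist_eq_norm, e.dist_map]
  rw [Set.ncard_eq_toFinset_card']
  refine Complex.card_le_six_of_norm_le_norm_sub _ (fun a => e (f a) - e (f v)) ?_ ?_
  · intro a ha
    rw [Set.mem_toFinset, Set.mem_ofPred_eq] at ha
    exact sub_ne_zero.mpr ((e.injective.comp hf).ne ha.1)
  · intro a ha b hb hab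
    rw [Set.mem_toFinset, Set.mem_ofPred_eq] at ha hb
    rw [sub_sub_sub_cancel_right, hnorm, hnorm]
    exact hmst.dist_le_of_nbr ha hb hab

/-- The maximum degree of a minimum spanning tree of a finite planar Euclidean
point set is at most 6: every vertex has at most 6 neighbours. -/
theorem stmt16 {V : Type} [Fintype V] [DecidableEq V]
    (hn : 3 ≤ Fintype.card V) (f : V → EuclideanSpace ℝ (Fin 2))
    (hf : Function.Injective f)
    (T : ParentTree V) (hmst : IsMST T f) (v : V) :
    {a : V | Nbr T a v}.ncard ≤ 6 :=
  stmt16_general f hf T hmst v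
end
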